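/- arXiv:2408.09166 — 2 statements merged into one kernel-verified Lean document; each statement's English description precedes it below -/
import Mathlib

section
/- For all integers n ≥ 0 and k ≥ 4, hsp(n,k) = (k−2) · Σ_{m=2}^{n−k+1} Σ_{b=1}^{min{m−1, t}} C(n−2b−m−1, k−4)·(m−b), where t = ⌊(n−m−k+3)/2⌋, C(·,·) is the binomial coefficient, and empty sums are 0. -/
/-- The indices (0-based) of symmetric peaks of a list of naturals. -/
def symPeakIdx (L : List ℕ) : Finset ℕ :=
  (Finset.range L.length).filter (fun i =>
    i + 2 < L.length ∧ L.getD i 0 < L.getD (i+1) 0 ∧ L.getD i 0 = L.getD (i+2) 0)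

/-- `hsp π`: the sum of the heights of the symmetric peaks of `π`. -/
def hspL (L : List ℕ) : ℕ := ∑ i ∈ symPeakIdx L, (L.getD (i+1) 0 - L.getD i 0)

/-- `hsp(n,k)`: the total sum of heights of symmetric peaks over all compositions of `n`
with exactly `k` parts. -/
def hspNK (n k : ℕ) : ℕ :=
  ∑ c ∈ (Finset.univ : Finset (Composition n)).filter (fun c => c.length = k),
    hspL c.blocks

/-!
Write `hsp π` as a sum over the positions `i < k - 2` of the height of a symmetric peak at `i`.
Rotating a composition by `i` is a permutation of `C_{n,k}` that brings the parts `i, i+1, i+2`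
to the front, so every position contributes the same total as position `0`. A symmetric peak
`(b, m, b)` at the front leaves a composition of `n - 2b - m` into `k - 3` parts, and there are
`C(n - 2b - m - 1, k - 4)` of those.
-/

open Finset

def compositions : ℕ → ℕ → Finset (List ℕ)
  | N, 0 => if N = 0 then {[]} else ∅
  | N, j + 1 => (Icc 1 N).biUnion fun a => (compositions (N - a) j).image (a :: ·)

theorem mem_compositions {L : List ℕ} {N j : ℕ} :
    L ∈ compositions N j ↔ L.length = j ∧ L.sum = N ∧ ∀ x ∈ L, 0 < x := by
  induction j generalizing N L with
  | zero => by_cases hN : N = 0 <;> cases L <;> simp [compositions, hN, eq_comm]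
  | succ j ih =>
    cases L with
    | nil => simp [compositions]
    | cons a L =>
      simp only [compositions, mem_biUnion, mem_image, mem_Icc, List.cons.injEq, ih,
        List.length_cons, List.sum_cons, List.forall_mem_cons]
      constructor
      · rintro ⟨a, ⟨ha, haN⟩, L, ⟨hlen, hsum, hpos⟩, rfl, rfl⟩
        exact ⟨by omega, by omega, ha, hpos⟩
      · rintro ⟨hlen, hsum, ha, hpos⟩
        exact ⟨a, ⟨ha, by omega⟩, L, ⟨by omega, by omega, hpos⟩, rfl, rfl⟩

theorem sum_compositions_succ {M : Type*} [AddCommMonoid M] (f : List ℕ → M) (N j : ℕ) :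
    ∑ L ∈ compositions N (j + 1), f L =
      ∑ a ∈ Icc 1 N, ∑ L ∈ compositions (N - a) j, f (a :: L) := by
  rw [compositions, sum_biUnion]
  · exact sum_congr rfl fun a _ => sum_image fun _ _ _ _ h => List.cons_injective h
  · intro a _ b _ hab
    simp only [Function.onFun, disjoint_left, mem_image]
    rintro _ ⟨_, _, rfl⟩ ⟨_, _, h⟩
    exact hab (List.cons.inj h).1.symm

theorem compositions_eq_empty_of_lt {N j : ℕ} (h : N < j) : compositions N j = ∅ := by
  refine eq_empty_of_forall_notMem fun L hL => ?_
  obtain ⟨hlen, hsum, hpos⟩ := mem_compositions.1 hL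
  have := List.length_le_sum_of_one_le L hpos
  omega

theorem sum_range_choose_eq_choose_succ (N j : ℕ) :
    ∑ s ∈ range N, s.choose j = N.choose (j + 1) := by
  induction N with
  | zero => simp
  | succ N ih => rw [sum_range_succ, ih, Nat.choose_succ_succ', add_comm]

theorem card_compositions_succ (N j : ℕ) :
    #(compositions N (j + 1)) = ∑ a ∈ Icc 1 N, #(compositions (N - a) j) := by
  simp only [card_eq_sum_ones, sum_compositions_succ]

theorem card_compositions_succ_succ (N j : ℕ) :
    #(compositions (N + 1) (j + 1)) = N.choose j := by
  induction j generalizing N with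
  | zero =>
    rw [Nat.choose_zero_right, card_eq_one]
    refine ⟨[N + 1], ext fun L => ?_⟩
    simp only [mem_compositions, mem_singleton]
    constructor
    · rintro ⟨hlen, hsum, -⟩
      obtain ⟨a, rfl⟩ := List.length_eq_one_iff.1 hlen
      simp_all
    · rintro rfl
      simp
  | succ j ih =>
    rw [card_compositions_succ, ← Ico_add_one_right_eq_Icc,
      sum_Ico_reflect (fun s => #(compositions s (j + 1))) 1 le_rfl]
    simp only [Nat.add_sub_cancel, Nat.sub_self, ← range_eq_Ico]
    rw [sum_range_succ', compositions_eq_empty_of_lt (Nat.succ_pos j), card_empty, add_zero]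
    simp only [ih, sum_range_choose_eq_choose_succ]

theorem rotate_mem_compositions {L : List ℕ} {N j : ℕ} (hL : L ∈ compositions N j) (i : ℕ) :
    L.rotate i ∈ compositions N j := by
  obtain ⟨hlen, hsum, hpos⟩ := mem_compositions.1 hL
  exact mem_compositions.2 ⟨(L.length_rotate i).trans hlen, by rw [(L.rotate_perm i).sum_eq, hsum],
    fun x hx => hpos x (List.mem_rotate.1 hx)⟩

theorem sum_compositions_rotate {M : Type*} [AddCommMonoid M] (f : List ℕ → M) (N j i : ℕ) :
    ∑ L ∈ compositions N j, f (L.rotate i) = ∑ L ∈ compositions N j, f L := by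
  refine sum_nbij (·.rotate i) (fun L hL => rotate_mem_compositions hL i)
    (fun L _ L' _ h => List.rotate_injective i h) (fun L hL => ?_) fun _ _ => rfl
  exact ⟨_, rotate_mem_compositions hL _, List.rotate_eq_iff.2 rfl⟩

def headPeakHeight : List ℕ → ℕ
  | a :: m :: c :: _ => if a < m ∧ a = c then m - a else 0
  | _ => 0

theorem headPeakHeight_append {l : List ℕ} (h : 3 ≤ l.length) (r : List ℕ) :
    headPeakHeight (l ++ r) = headPeakHeight l := by
  match l, h with
  | _ :: _ :: _ :: _, _ => rfl

theorem headPeakHeight_drop {L : List ℕ} {i : ℕ} (h : i + 2 < L.length) :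
    headPeakHeight (L.drop i) =
      if L.getD i 0 < L.getD (i + 1) 0 ∧ L.getD i 0 = L.getD (i + 2) 0
      then L.getD (i + 1) 0 - L.getD i 0 else 0 := by
  have getD_eq (j : ℕ) : L.getD (i + j) 0 = (L.drop i).getD j 0 := by
    simp [List.getD_eq_getElem?_getD]
  rw [getD_eq 1, getD_eq 2, show L.getD i 0 = (L.drop i).getD 0 0 from getD_eq 0]
  match L.drop i, (by rw [List.length_drop]; omega : 3 ≤ (L.drop i).length) with
  | a :: m :: c :: _, _ => simp [headPeakHeight]

theorem hspL_eq_sum_headPeakHeight_rotate (L : List ℕ) :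
    hspL L = ∑ i ∈ range (L.length - 2), headPeakHeight (L.rotate i) := by
  have hidx : symPeakIdx L = (range (L.length - 2)).filter fun i =>
      L.getD i 0 < L.getD (i + 1) 0 ∧ L.getD i 0 = L.getD (i + 2) 0 := by
    ext i
    simp only [symPeakIdx, mem_filter, mem_range]
    omega
  rw [hspL, hidx, sum_filter]
  refine sum_congr rfl fun i hi => ?_
  have hi : i + 2 < L.length := by rw [mem_range] at hi; omega
  rw [List.rotate_eq_drop_append_take (by omega),
    headPeakHeight_append (by rw [List.length_drop]; omega),
    headPeakHeight_drop hi]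

theorem hspNK_eq_sum_compositions (n k : ℕ) :
    hspNK n k = ∑ L ∈ compositions n k, hspL L := by
  refine sum_bij (fun c _ => c.blocks) (fun c hc => ?_) (fun _ _ _ _ => Composition.ext)
    (fun L hL => ?_) fun _ _ => rfl
  · exact mem_compositions.2 ⟨(mem_filter.1 hc).2, c.blocks_sum, fun _ => c.blocks_pos⟩
  · obtain ⟨hlen, hsum, hpos⟩ := mem_compositions.1 hL
    exact ⟨⟨L, hpos _, hsum⟩, mem_filter.2 ⟨mem_univ _, hlen⟩, rfl⟩

theorem sum_hspL_compositions (N k : ℕ) :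
    ∑ L ∈ compositions N k, hspL L = (k - 2) * ∑ L ∈ compositions N k, headPeakHeight L :=
  calc ∑ L ∈ compositions N k, hspL L
      = ∑ L ∈ compositions N k, ∑ i ∈ range (k - 2), headPeakHeight (L.rotate i) :=
        sum_congr rfl fun L hL => by
          rw [hspL_eq_sum_headPeakHeight_rotate, (mem_compositions.1 hL).1]
    _ = ∑ i ∈ range (k - 2), ∑ L ∈ compositions N k, headPeakHeight L := by
        rw [sum_comm]
        exact sum_congr rfl fun i _ => sum_compositions_rotate _ _ _ _
    _ = (k - 2) * ∑ L ∈ compositions N k, headPeakHeight L := by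
        rw [sum_const, card_range, smul_eq_mul]

theorem sum_headPeakHeight_compositions (N j : ℕ) :
    ∑ L ∈ compositions N (j + 3), headPeakHeight L =
      ∑ a ∈ Icc 1 N, ∑ m ∈ Icc 1 (N - a),
        if a < m ∧ 2 * a + m ≤ N then (m - a) * #(compositions (N - 2 * a - m) j) else 0 := by
  rw [sum_compositions_succ]
  refine sum_congr rfl fun a ha => ?_
  rw [sum_compositions_succ]
  refine sum_congr rfl fun m _ => ?_
  rw [sum_compositions_succ]
  simp only [headPeakHeight, sum_const, smul_eq_mul]
  by_cases ham : a < m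
  · simp only [ham, true_and, mul_ite, mul_zero]
    rw [sum_ite_eq, mul_comm, show N - a - m - a = N - 2 * a - m by omega]
    simp only [mem_Icc] at ha ⊢
    exact if_congr (by omega) rfl rfl
  · simp [ham]

theorem sum_headPeakHeight_compositions_eq_sum_choose (n k : ℕ) (hk : 4 ≤ k) :
    ∑ L ∈ compositions n k, headPeakHeight L =
      ∑ m ∈ Icc 2 (n - k + 1), ∑ b ∈ Icc 1 (min (m - 1) ((n + 3 - m - k) / 2)),
        Nat.choose (n - 2 * b - m - 1) (k - 4) * (m - b) := by
  obtain ⟨j, rfl⟩ : ∃ j, k = j + 1 + 3 := ⟨k - 4, by omega⟩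
  rw [sum_headPeakHeight_compositions]
  have hterm (b m : ℕ) (hb : 1 ≤ b) : (if b < m ∧ 2 * b + m ≤ n then
        (m - b) * #(compositions (n - 2 * b - m) (j + 1)) else 0) =
      if m ≤ n - (j + 1 + 3) + 1 ∧ b ≤ min (m - 1) ((n + 3 - m - (j + 1 + 3)) / 2) then
        Nat.choose (n - 2 * b - m - 1) (j + 1 + 3 - 4) * (m - b) else 0 := by
    split_ifs with hpos hrange hrange
    · obtain ⟨N, hN⟩ : ∃ N, n - 2 * b - m = N + 1 := ⟨n - 2 * b - m - 1, by omega⟩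
      rw [hN, card_compositions_succ_succ, mul_comm]
      simp
    · rw [compositions_eq_empty_of_lt (by omega), card_empty, mul_zero]
    · omega
    · rfl
  rw [sum_congr rfl fun b hb => sum_congr rfl fun m _ => hterm b m (mem_Icc.1 hb).1]
  simp only [← sum_filter]
  exact sum_comm' fun b m => by simp only [mem_filter, mem_Icc]; omega

/-- For `n ≥ 0` and `k ≥ 4`,
`hsp(n,k) = (k−2)·Σ_{m=2}^{n−k+1} Σ_{b=1}^{min{m−1,t}} C(n−2b−m−1, k−4)·(m−b)`,
where `t = ⌊(n−m−k+3)/2⌋`.  (All subtractions below are exact: within the summation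
ranges no natural-number truncation occurs, and empty ranges give empty sums.) -/
theorem hspNK_combinatorial (n k : ℕ) (hk : 4 ≤ k) :
    hspNK n k =
      (k - 2) * ∑ m ∈ Finset.Icc 2 (n - k + 1),
        ∑ b ∈ Finset.Icc 1 (min (m - 1) ((n + 3 - m - k) / 2)),
          Nat.choose (n - 2*b - m - 1) (k - 4) * (m - b) := by
  rw [hspNK_eq_sum_compositions, sum_hspL_compositions,
    sum_headPeakHeight_compositions_eq_sum_choose n k hk]
end

section
/- Fix a real p with 0 < p ≤ 1 and q = 1 − p, and let n ≥ 2 be an integer. Then Σ_{w ∈ (ℤ⁺)ⁿ} P(w)·hsp(w) = (p·q/(1−q³))·(n−2), where the sum over all words w of length n converges absolutely. In other words, the expected value of the sum of heights of symmetric peaks in a sample of n geometric random variables is pq(n−2)/(1−q³). -/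
/-- The probability of the word `w` of length `n` with i.i.d. geometric letters:
`P(w) = ∏_{i} p·q^{wᵢ−1}`. -/
def wordP (p q : ℝ) {n : ℕ} (w : Fin n → ℕ+) : ℝ :=
  ∏ i : Fin n, p * q ^ ((w i : ℕ) - 1)

open scoped ENNReal

/-!
The height sum `hsp` is a sum over the windows of three consecutive letters, and dropping the
first letter of a word removes exactly the window that starts there. As the letters are
independent and each has total mass one, the expectation therefore grows by the same amount,
the expected height of a single window, each time a letter is added, and it vanishes for
words of length two. A single window contributes `∑_{a < b} (b - a) P(a)² P(b)`, which for
`P(a) = p q^(a-1)` factors into `p³ ∑ q^(3x) · ∑ m q^m = pq / (1 - q³)`.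
All sums are taken in `ℝ≥0∞`, where they may be rearranged freely; summability of the real
series is read off at the end.
-/

section WordSums

variable {α : Type*}

theorem ENNReal.tsum_fin_succ_pi {k : ℕ} (F : (Fin (k + 1) → α) → ℝ≥0∞) :
    ∑' w, F w = ∑' a, ∑' v : Fin k → α, F (Fin.cons a v) := by
  rw [← (Fin.consEquiv fun _ => α).tsum_eq, ENNReal.tsum_prod']
  rfl

variable (c : α → ℝ≥0∞)

theorem ENNReal.tsum_prod_mul_fin_succ {k : ℕ} (F : (Fin (k + 1) → α) → ℝ≥0∞) :
    ∑' w, (∏ j, c (w j)) * F w =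
      ∑' a, c a * ∑' v : Fin k → α, (∏ j, c (v j)) * F (Fin.cons a v) := by
  rw [ENNReal.tsum_fin_succ_pi]
  refine tsum_congr fun a => ?_
  rw [← ENNReal.tsum_mul_left]
  refine tsum_congr fun v => ?_
  rw [Fin.prod_univ_succ]
  simp only [Fin.cons_zero, Fin.cons_succ, mul_assoc]

theorem ENNReal.tsum_prod_eq_pow (n : ℕ) :
    ∑' w : Fin n → α, ∏ j, c (w j) = (∑' a, c a) ^ n := by
  induction n with
  | zero => simp
  | succ k ih =>
    simpa [ENNReal.tsum_mul_right, ih, pow_succ'] using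
      ENNReal.tsum_prod_mul_fin_succ c (k := k) (fun _ => 1)

variable {c}

theorem ENNReal.tsum_prod_mul_apply_zero (hc : ∑' a, c a = 1) {k : ℕ} (G : α → ℝ≥0∞) :
    ∑' w : Fin (k + 1) → α, (∏ j, c (w j)) * G (w 0) = ∑' a, c a * G a := by
  simp_rw [ENNReal.tsum_prod_mul_fin_succ, Fin.cons_zero, ENNReal.tsum_mul_right,
    ENNReal.tsum_prod_eq_pow, hc, one_pow, one_mul]

theorem ENNReal.tsum_prod_mul_apply_zero_one (hc : ∑' a, c a = 1) {k : ℕ}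
    (G : α → α → ℝ≥0∞) :
    ∑' w : Fin (k + 2) → α, (∏ j, c (w j)) * G (w 0) (w 1) = ∑' a, ∑' b, c a * c b * G a b := by
  rw [ENNReal.tsum_prod_mul_fin_succ]
  simp_rw [Fin.cons_zero, Fin.cons_one, ENNReal.tsum_prod_mul_apply_zero hc,
    ← ENNReal.tsum_mul_left, mul_assoc]

end WordSums

theorem ENNReal.tsum_mul_pow_pnat (s r : ℝ≥0∞) :
    ∑' a : ℕ+, s * r ^ ((a : ℕ) - 1) = s * (1 - r)⁻¹ := by
  rw [tsum_pnat_eq_tsum_succ (f := fun a => s * r ^ (a - 1))]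
  simp [ENNReal.tsum_mul_left, ENNReal.tsum_geometric]

theorem ENNReal.tsum_pow_mul_tsub (r : ℝ≥0∞) (x : ℕ) :
    ∑' y : ℕ, r ^ y * (y - x : ℕ) = r ^ x * ∑' m : ℕ, r ^ m * m := by
  rw [← (add_left_injective x).tsum_eq, ← ENNReal.tsum_mul_left]
  · refine tsum_congr fun m => ?_
    rw [Nat.add_sub_cancel, pow_add]
    ring
  · intro y hy
    have hxy : x ≤ y := by
      by_contra h
      rw [Function.mem_support, Nat.sub_eq_zero_of_le (le_of_not_ge h), Nat.cast_zero,
        mul_zero] at hy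
      exact hy rfl
    exact ⟨y - x, Nat.sub_add_cancel hxy⟩

theorem ENNReal.tsum_ofReal_pow_mul_natCast {q : ℝ} (hq0 : 0 ≤ q) (hq1 : q < 1) :
    ∑' m : ℕ, ENNReal.ofReal q ^ m * m = ENNReal.ofReal (q / (1 - q) ^ 2) := by
  have hq : ‖q‖ < 1 := by rwa [Real.norm_of_nonneg hq0]
  rw [← tsum_coe_mul_geometric_of_norm_lt_one hq, ENNReal.ofReal_tsum_of_nonneg
    (fun m => by positivity) (hasSum_coe_mul_geometric_of_norm_lt_one hq).summable]
  refine tsum_congr fun m => ?_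
  rw [ENNReal.ofReal_mul (Nat.cast_nonneg m), ENNReal.ofReal_natCast, ENNReal.ofReal_pow hq0,
    mul_comm]

theorem hasSum_of_tsum_ofReal_eq {ι : Type*} {f : ι → ℝ} (hf : ∀ i, 0 ≤ f i) {A : ℝ}
    (hA : 0 ≤ A) (h : ∑' i, ENNReal.ofReal (f i) = ENNReal.ofReal A) : HasSum f A := by
  have hnn : HasSum (fun i => (f i).toNNReal) A.toNNReal := by
    have := (ENNReal.summable (f := fun i => ENNReal.ofReal (f i))).hasSum
    rw [h] at this
    exact ENNReal.hasSum_coe.mp this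
  simpa [Real.coe_toNNReal _ (hf _), hA] using NNReal.hasSum_coe.mpr hnn

def peakHeight (a b d : ℕ) : ℕ := if a < b ∧ a = d then b - a else 0

theorem hspL_eq_zero_of_length_le_two {L : List ℕ} (hL : L.length ≤ 2) : hspL L = 0 := by
  refine Finset.sum_eq_zero fun i hi => ?_
  simp only [symPeakIdx, Finset.mem_filter] at hi
  omega

theorem hspL_cons (a : ℕ) {L : List ℕ} (hL : 2 ≤ L.length) :
    hspL (a :: L) = peakHeight a (L.getD 0 0) (L.getD 1 0) + hspL L := by
  simp only [hspL, symPeakIdx, Finset.sum_filter, List.length_cons, Finset.sum_range_succ',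
    List.getD_cons_succ, List.getD_cons_zero, add_comm (peakHeight ..)]
  congr 1
  · refine Finset.sum_congr rfl fun i _ => ?_
    simp only [show i + 1 + 2 < L.length + 1 ↔ i + 2 < L.length by omega]
  · simp [peakHeight, show 2 < L.length + 1 by omega]

noncomputable def expectedHsp (c : ℕ+ → ℝ≥0∞) (n : ℕ) : ℝ≥0∞ :=
  ∑' w : Fin n → ℕ+, (∏ j, c (w j)) * hspL (List.ofFn fun j => (w j : ℕ))

noncomputable def expectedPeakHeight (c : ℕ+ → ℝ≥0∞) : ℝ≥0∞ :=
  ∑' (a : ℕ+) (b : ℕ+) (d : ℕ+), c a * c b * c d * peakHeight a b d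

section Expectation

variable {c : ℕ+ → ℝ≥0∞}

theorem expectedHsp_two : expectedHsp c 2 = 0 := by
  simp [expectedHsp, hspL_eq_zero_of_length_le_two]

theorem expectedHsp_add_three (hc : ∑' a, c a = 1) (k : ℕ) :
    expectedHsp c (k + 3) = expectedPeakHeight c + expectedHsp c (k + 2) := by
  have hsplit : ∀ (a : ℕ+) (v : Fin (k + 2) → ℕ+),
      hspL (List.ofFn fun j => ((Fin.cons a v : Fin (k + 3) → ℕ+) j : ℕ)) =
        peakHeight a (v 0) (v 1) + hspL (List.ofFn fun j => (v j : ℕ)) := by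
    intro a v
    rw [List.ofFn_succ, hspL_cons _ (by simp)]
    simp
  have hpeak : ∀ a : ℕ+,
      ∑' v : Fin (k + 2) → ℕ+, (∏ j, c (v j)) * (peakHeight a (v 0) (v 1) : ℝ≥0∞) =
        ∑' (b : ℕ+) (d : ℕ+), c b * c d * peakHeight a b d := fun a =>
    ENNReal.tsum_prod_mul_apply_zero_one hc fun b d => (peakHeight a b d : ℝ≥0∞)
  rw [expectedHsp, ENNReal.tsum_prod_mul_fin_succ]
  simp_rw [hsplit, Nat.cast_add, mul_add, ENNReal.tsum_add, hpeak, mul_add, ENNReal.tsum_add,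
    ENNReal.tsum_mul_right, hc, one_mul]
  congr 1
  simp_rw [expectedPeakHeight, ← ENNReal.tsum_mul_left, mul_assoc]

theorem expectedHsp_add_two (hc : ∑' a, c a = 1) (k : ℕ) :
    expectedHsp c (k + 2) = k * expectedPeakHeight c := by
  induction k with
  | zero => simp [expectedHsp_two]
  | succ k ih => rw [expectedHsp_add_three hc, ih]; push_cast; ring

end Expectation

theorem expectedPeakHeight_mul_pow (s r : ℝ≥0∞) :
    expectedPeakHeight (fun a => s * r ^ ((a : ℕ) - 1)) =
      s ^ 3 * (∑' m : ℕ, r ^ m * m) * (1 - r ^ 3)⁻¹ := by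
  set c : ℕ+ → ℝ≥0∞ := fun a => s * r ^ ((a : ℕ) - 1)
  -- only `d = a` contributes, and the truncated `b - a` already vanishes unless `a < b`
  have hd : ∀ a b : ℕ+, ∑' d : ℕ+, c a * c b * c d * peakHeight a b d
      = c a * c b * c a * ((b : ℕ) - a : ℕ) := by
    intro a b
    rw [tsum_eq_single a fun d hd => by simp [peakHeight, Ne.symm hd, PNat.coe_inj]]
    unfold peakHeight
    split_ifs with h <;> simp_all
  calc expectedPeakHeight c
      = ∑' (a : ℕ+) (b : ℕ+), c a * c b * c a * ((b : ℕ) - a : ℕ) := by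
        simp_rw [expectedPeakHeight, hd]
    _ = ∑' x : ℕ, ∑' y : ℕ, s * r ^ x * (s * r ^ y) * (s * r ^ x) * (y - x : ℕ) := by
        let f : ℕ → ℕ → ℝ≥0∞ := fun x y => s * r ^ (x - 1) * (s * r ^ (y - 1)) *
          (s * r ^ (x - 1)) * (y - x : ℕ)
        refine (tsum_pnat_eq_tsum_succ (f := fun x => ∑' b : ℕ+, f x b)).trans
          (tsum_congr fun x => (tsum_pnat_eq_tsum_succ (f := f (x + 1))).trans ?_)
        simp only [f, Nat.add_sub_cancel, Nat.add_sub_add_right]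
    _ = ∑' x : ℕ, s ^ 3 * (r ^ 3) ^ x * ∑' m : ℕ, r ^ m * m := by
        refine tsum_congr fun x => ?_
        calc ∑' y : ℕ, s * r ^ x * (s * r ^ y) * (s * r ^ x) * (y - x : ℕ)
            = s ^ 3 * r ^ (2 * x) * ∑' y : ℕ, r ^ y * (y - x : ℕ) := by
              rw [← ENNReal.tsum_mul_left]
              exact tsum_congr fun y => by ring
          _ = s ^ 3 * (r ^ 3) ^ x * ∑' m : ℕ, r ^ m * m := by
              rw [ENNReal.tsum_pow_mul_tsub]
              ring
    _ = s ^ 3 * (∑' m : ℕ, r ^ m * m) * (1 - r ^ 3)⁻¹ := by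
        rw [ENNReal.tsum_mul_right, ENNReal.tsum_mul_left, ENNReal.tsum_geometric]
        ring

noncomputable def geomWeight (p : ℝ) (a : ℕ+) : ℝ≥0∞ :=
  ENNReal.ofReal p * ENNReal.ofReal (1 - p) ^ ((a : ℕ) - 1)

theorem tsum_geomWeight {p : ℝ} (hp : 0 < p) (hp1 : p ≤ 1) : ∑' a, geomWeight p a = 1 := by
  have hcompl : 1 - ENNReal.ofReal (1 - p) = ENNReal.ofReal p := by
    rw [← ENNReal.ofReal_one, ← ENNReal.ofReal_sub _ (sub_nonneg.mpr hp1), sub_sub_cancel]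
  unfold geomWeight
  rw [ENNReal.tsum_mul_pow_pnat, hcompl]
  exact ENNReal.mul_inv_cancel (by simpa using hp) ENNReal.ofReal_ne_top

theorem expectedPeakHeight_geomWeight {p : ℝ} (hp : 0 < p) (hp1 : p ≤ 1) :
    expectedPeakHeight (geomWeight p) = ENNReal.ofReal (p * (1 - p) / (1 - (1 - p) ^ 3)) := by
  have hq0 : 0 ≤ 1 - p := sub_nonneg.mpr hp1
  have hq3 : 0 < 1 - (1 - p) ^ 3 := sub_pos.mpr (pow_lt_one₀ hq0 (by linarith) three_ne_zero)
  unfold geomWeight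
  rw [expectedPeakHeight_mul_pow, ENNReal.tsum_ofReal_pow_mul_natCast hq0 (by linarith),
    ← ENNReal.ofReal_pow hq0, ← ENNReal.ofReal_one, ← ENNReal.ofReal_sub _ (by positivity),
    ← ENNReal.ofReal_inv_of_pos hq3, ← ENNReal.ofReal_pow hp.le,
    ← ENNReal.ofReal_mul (by positivity), ← ENNReal.ofReal_mul (by positivity)]
  congr 1
  field_simp [hp.ne']
  ring

theorem wordP_nonneg {p q : ℝ} (hp : 0 ≤ p) (hq : 0 ≤ q) {n : ℕ} (w : Fin n → ℕ+) :
    0 ≤ wordP p q w :=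
  Finset.prod_nonneg fun _ _ => by positivity

theorem ofReal_wordP {p : ℝ} (hp : 0 ≤ p) (hp1 : p ≤ 1) {n : ℕ} (w : Fin n → ℕ+) :
    ENNReal.ofReal (wordP p (1 - p) w) = ∏ j, geomWeight p (w j) := by
  rw [wordP, ENNReal.ofReal_prod_of_nonneg fun _ _ => mul_nonneg hp (pow_nonneg (by linarith) _)]
  simp_rw [ENNReal.ofReal_mul hp, ENNReal.ofReal_pow (sub_nonneg.mpr hp1), geomWeight]

/-- For `0 < p ≤ 1`, `q = 1 − p`, and `n ≥ 2`, the expected value of the sum of heights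
of symmetric peaks in a sample of `n` geometric random variables is `pq(n−2)/(1−q³)`;
the sum over all words converges (absolutely, as all terms are nonnegative). -/
theorem expected_heights_symmetric_peaks (p q : ℝ) (hp : 0 < p) (hp1 : p ≤ 1)
    (hq : q = 1 - p) (n : ℕ) (hn : 2 ≤ n) :
    Summable (fun w : Fin n → ℕ+ =>
      wordP p q w * (hspL (List.ofFn fun i => (w i : ℕ)) : ℝ)) ∧
    ∑' w : Fin n → ℕ+, wordP p q w * (hspL (List.ofFn fun i => (w i : ℕ)) : ℝ)
      = p * q / (1 - q ^ 3) * ((n : ℝ) - 2) := by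
  subst hq
  obtain ⟨k, rfl⟩ := Nat.exists_eq_add_of_le' hn
  have hq0 : 0 ≤ 1 - p := sub_nonneg.mpr hp1
  have hq3 : 0 < 1 - (1 - p) ^ 3 := sub_pos.mpr (pow_lt_one₀ hq0 (by linarith) three_ne_zero)
  have hmass : ∑' w : Fin (k + 2) → ℕ+,
      ENNReal.ofReal (wordP p (1 - p) w * (hspL (List.ofFn fun i => (w i : ℕ)) : ℝ)) =
        ENNReal.ofReal (p * (1 - p) / (1 - (1 - p) ^ 3) * k) := by
    calc _ = expectedHsp (geomWeight p) (k + 2) := tsum_congr fun w => by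
            rw [ENNReal.ofReal_mul' (Nat.cast_nonneg _), ofReal_wordP hp.le hp1,
              ENNReal.ofReal_natCast]
      _ = k * expectedPeakHeight (geomWeight p) := expectedHsp_add_two (tsum_geomWeight hp hp1) k
      _ = _ := by
          rw [expectedPeakHeight_geomWeight hp hp1, ← ENNReal.ofReal_natCast,
            ← ENNReal.ofReal_mul (Nat.cast_nonneg _), mul_comm]
  have hsum := hasSum_of_tsum_ofReal_eq
    (fun w => mul_nonneg (wordP_nonneg hp.le hq0 w) (Nat.cast_nonneg _)) (by positivity) hmass
  refine ⟨hsum.summable, ?_⟩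
  rw [hsum.tsum_eq]
  push_cast
  ring
end
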